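/- For each m ≥ 1 let c_m : {1,…,m} → {0, 1, 2} be an arbitrary choice function, and define J_m^c(x) = κ · Σ_{j=1}^{m} ∫_{A^m_{3(j−1)+1+c_m(j)}} W(x − y) dy (i.e., for each block of three consecutive subintervals, one of the three is selected as a spiking strip). Then J_m^c converges to J_b(·, η1, η2) uniformly in x ∈ ℝ as m → ∞, uniformly over all such choices: for every ε > 0 there exists M such that for all m ≥ M, all choice functions c_m, and all x ∈ ℝ, |J_m^c(x) − J_b(x, η1, η2)| < ε. -/

import Mathlib

open MeasureTheory

/-- Given a choice function `c` selecting, in each block of three consecutive strips,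
which strip is spiking, the associated mesoscopic profile is
`J_m^c(x) = κ · Σ_{j=1}^{m} ∫_{A^m_{3(j−1)+1+c(j)}} W(x − y) dy`, where
`A^m_i = [η1 + (i−1)(η2−η1)/(3m), η1 + i(η2−η1)/(3m))`. -/
noncomputable def Jmc (W : ℝ → ℝ) (κ η1 η2 : ℝ) (c : ℕ → Fin 3) (m : ℕ) (x : ℝ) : ℝ :=
  κ * ∑ j ∈ Finset.range m,
    ∫ y in (η1 + (3 * (j : ℝ) + ((c j : ℕ) : ℝ)) * (η2 - η1) / (3 * (m : ℝ)))..(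
            η1 + (3 * (j : ℝ) + ((c j : ℕ) : ℝ) + 1) * (η2 - η1) / (3 * (m : ℝ))), W (x - y)

/-- The limiting mesoscopic bump profile `J_b(x, η1, η2) = (κ/3) ∫_{η1}^{η2} W(x−y) dy`. -/
noncomputable def Jb (W : ℝ → ℝ) (κ η1 η2 : ℝ) (x : ℝ) : ℝ :=
  (κ / 3) * ∫ y in η1..η2, W (x - y)

/-! A continuous periodic `W` is uniformly continuous, so on a block of three consecutive strips
(of total width `|η2 - η1| / m`) the function `y ↦ W (x - y)` stays within `ω` of its value at
the left end, where `ω → 0` as `m → ∞` independently of `x`. Comparing both integrals with that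
value, the integral over any one strip of a block differs from a third of the block integral by at
most twice `ω` times the strip width. Summing over the `m` blocks gives
`|J_m^c x - J_b x| ≤ (2/3) |κ| ω |η2 - η1|`, uniformly in `x` and in the choice `c`. -/

open Set intervalIntegral Finset

theorem Function.Periodic.uniformContinuous_of_continuous {α : Type*} [UniformSpace α]
    {f : ℝ → α} {c : ℝ} (hp : Function.Periodic f c) (hc : c ≠ 0) (hf : Continuous f) :
    UniformContinuous f := by
  wlog hc₀ : 0 < c generalizing c
  · exact this hp.neg (neg_ne_zero.2 hc) (neg_pos.2 (lt_of_le_of_ne (not_lt.1 hc₀) hc))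
  have := Fact.mk hc₀
  have hlift : Continuous (hp.lift : AddCircle c → α) :=
    (QuotientAddGroup.isQuotientMap_mk _).continuous_iff.mpr hf
  exact (CompactSpace.uniformContinuous_of_continuous hlift).comp
    (uniformContinuous_addMonoidHom_of_continuous
      (f := QuotientAddGroup.mk' (AddSubgroup.zmultiples c)) QuotientAddGroup.continuous_mk)

theorem abs_intervalIntegral_sub_mul_le {f : ℝ → ℝ} {u v k C : ℝ}
    (hf : IntervalIntegrable f volume u v) (h : ∀ y ∈ uIoc u v, |f y - k| ≤ C) :
    |(∫ y in u..v, f y) - (v - u) * k| ≤ C * |v - u| := by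
  rw [← smul_eq_mul, ← intervalIntegral.integral_const, ← integral_sub hf intervalIntegrable_const]
  exact norm_integral_le_of_norm_le_const (f := fun y => f y - k) h

theorem add_mul_mem_uIcc {a ℓ t s : ℝ} (ht : 0 ≤ t) (hts : t ≤ s) :
    a + t * ℓ ∈ uIcc a (a + s * ℓ) := by
  rcases le_total 0 ℓ with hℓ | hℓ
  · exact mem_uIcc_of_le (by nlinarith) (by nlinarith)
  · exact mem_uIcc_of_ge (by nlinarith) (by nlinarith)

theorem abs_integral_strip_sub_integral_block_div_three_le {f : ℝ → ℝ} (hf : Continuous f)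
    {a ℓ t C : ℝ} (ht₀ : 0 ≤ t) (ht₂ : t ≤ 2)
    (hC : ∀ y ∈ uIcc a (a + 3 * ℓ), |f y - f a| ≤ C) :
    |(∫ y in a + t * ℓ..a + (t + 1) * ℓ, f y) - (∫ y in a..a + 3 * ℓ, f y) / 3|
      ≤ 2 * C * |ℓ| := by
  have hstrip : uIoc (a + t * ℓ) (a + (t + 1) * ℓ) ⊆ uIcc a (a + 3 * ℓ) :=
    uIoc_subset_uIcc.trans <| uIcc_subset_uIcc (add_mul_mem_uIcc ht₀ (by linarith))
      (add_mul_mem_uIcc (by linarith) (by linarith))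
  have h₁ := abs_intervalIntegral_sub_mul_le (hf.intervalIntegrable _ _)
    fun y hy => hC y (hstrip hy)
  have h₂ := abs_intervalIntegral_sub_mul_le (hf.intervalIntegrable _ _)
    fun y hy => hC y (uIoc_subset_uIcc hy)
  rw [show a + (t + 1) * ℓ - (a + t * ℓ) = ℓ by ring] at h₁
  rw [add_sub_cancel_left, abs_mul 3 ℓ, abs_of_pos (by norm_num : (0 : ℝ) < 3)] at h₂
  calc _ = |((∫ y in a + t * ℓ..a + (t + 1) * ℓ, f y) - ℓ * f a)
          - ((∫ y in a..a + 3 * ℓ, f y) - 3 * ℓ * f a) / 3| := by ring_nf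
    _ ≤ _ := by
      rw [abs_le] at h₁ h₂ ⊢
      constructor <;> linarith [h₁.1, h₁.2, h₂.1, h₂.2]

theorem abs_Jmc_sub_Jb_le {W : ℝ → ℝ} (hW : Continuous W) (κ η1 η2 : ℝ) (c : ℕ → Fin 3)
    {m : ℕ} (hm : m ≠ 0) (x : ℝ) {C : ℝ}
    (hC : ∀ y z, |y - z| ≤ |η2 - η1| / m → |W y - W z| ≤ C) :
    |Jmc W κ η1 η2 c m x - Jb W κ η1 η2 x| ≤ 2 / 3 * |κ| * C * |η2 - η1| := by
  set ℓ := (η2 - η1) / (3 * m) with hℓ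
  set a : ℕ → ℝ := fun j => η1 + 3 * j * ℓ with ha
  have hm₀ : (0 : ℝ) < m := Nat.cast_pos.2 (Nat.pos_of_ne_zero hm)
  have hℓabs : |ℓ| = |η2 - η1| / (3 * m) := by
    rw [hℓ, abs_div, abs_of_pos (by positivity : (0 : ℝ) < 3 * m)]
  have hf : Continuous fun y => W (x - y) := by fun_prop
  have hJmc : Jmc W κ η1 η2 c m x = κ * ∑ j ∈ range m,
      ∫ y in a j + (c j : ℕ) * ℓ..a j + ((c j : ℕ) + 1) * ℓ, W (x - y) := by
    unfold Jmc
    congr 1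
    refine sum_congr rfl fun j _ => ?_
    congr 1 <;> ring
  have hJb : Jb W κ η1 η2 x = κ * ∑ j ∈ range m, (∫ y in a j..a j + 3 * ℓ, W (x - y)) / 3 := by
    have hstart : a 0 = η1 := by simp only [ha]; push_cast; ring
    have hend : a m = η2 := by simp only [ha, hℓ]; field_simp; ring
    have hsucc : ∀ j, a (j + 1) = a j + 3 * ℓ := fun j => by simp only [ha]; push_cast; ring
    rw [Jb, ← sum_div, ← hstart, ← hend,
      ← sum_integral_adjacent_intervals fun _ _ => hf.intervalIntegrable _ _]
    simp only [hsucc]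
    ring
  have hblock : ∀ j ∈ range m,
      |(∫ y in a j + (c j : ℕ) * ℓ..a j + ((c j : ℕ) + 1) * ℓ, W (x - y))
        - (∫ y in a j..a j + 3 * ℓ, W (x - y)) / 3| ≤ 2 * C * |ℓ| := by
    intro j _
    refine abs_integral_strip_sub_integral_block_div_three_le hf (Nat.cast_nonneg _)
      (by exact_mod_cast Nat.le_of_lt_succ (c j).is_lt) fun y hy => hC _ _ ?_
    calc |x - y - (x - a j)| = |y - a j| := by rw [← abs_neg]; ring_nf
      _ ≤ |a j + 3 * ℓ - a j| := abs_sub_left_of_mem_uIcc hy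
      _ = |η2 - η1| / m := by
        rw [add_sub_cancel_left, abs_mul, hℓabs, abs_of_pos three_pos]
        field_simp
  rw [hJmc, hJb, ← mul_sub, ← sum_sub_distrib, abs_mul]
  calc |κ| * |∑ j ∈ range m, _| ≤ |κ| * ∑ _j ∈ range m, 2 * C * |ℓ| := by
        gcongr
        exact (abs_sum_le_sum_abs _ _).trans (sum_le_sum hblock)
    _ = 2 / 3 * |κ| * C * |η2 - η1| := by
      rw [sum_const, card_range, nsmul_eq_mul, hℓabs]
      field_simp

theorem Jmc_tendstoUniformly_Jb_general
    (L : ℝ) (hL : 0 < L) (W : ℝ → ℝ) (hWcont : Continuous W)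
    (hWper : Function.Periodic W (2 * L)) (κ : ℝ)
    (η1 η2 : ℝ) :
    ∀ ε > 0, ∃ M : ℕ, ∀ m ≥ M, ∀ c : ℕ → Fin 3, ∀ x : ℝ,
      |Jmc W κ η1 η2 c m x - Jb W κ η1 η2 x| < ε := by
  intro ε hε
  set K := |κ| * |η2 - η1|
  have hε' : 0 < ε / (K + 1) := by positivity
  obtain ⟨δ, hδ, hWδ⟩ := Metric.uniformContinuous_iff.1
    (hWper.uniformContinuous_of_continuous (by positivity) hWcont) _ hε'
  obtain ⟨M, hM⟩ := exists_nat_gt (|η2 - η1| / δ)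
  refine ⟨M, fun m hm c x => ?_⟩
  have hmδ : |η2 - η1| / δ < m := hM.trans_le (Nat.cast_le.2 hm)
  have hm₀ : (0 : ℝ) < m := (by positivity : 0 ≤ |η2 - η1| / δ).trans_lt hmδ
  have hmesh : |η2 - η1| / m < δ := (div_lt_comm₀ hm₀ hδ).2 hmδ
  refine (abs_Jmc_sub_Jb_le hWcont κ η1 η2 c (by exact_mod_cast hm₀.ne') x
    fun y z hyz => (hWδ (hyz.trans_lt hmesh)).le).trans_lt ?_
  calc 2 / 3 * |κ| * (ε / (K + 1)) * |η2 - η1| ≤ K * (ε / (K + 1)) := by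
        nlinarith [show 0 ≤ K by positivity]
    _ < (K + 1) * (ε / (K + 1)) := by gcongr; linarith
    _ = ε := mul_div_cancel₀ _ (by positivity)

/-- `J_m^c → J_b(·, η1, η2)` uniformly in `x ∈ ℝ` as `m → ∞`, uniformly over all
choice functions `c`. -/
theorem Jmc_tendstoUniformly_Jb
    (L : ℝ) (hL : 0 < L) (W : ℝ → ℝ) (hWcont : Continuous W)
    (hWper : Function.Periodic W (2 * L)) (κ : ℝ) (hκ : 0 < κ)
    (η1 η2 : ℝ) (hη : η1 < η2) :
    ∀ ε > 0, ∃ M : ℕ, ∀ m ≥ M, ∀ c : ℕ → Fin 3, ∀ x : ℝ,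
      |Jmc W κ η1 η2 c m x - Jb W κ η1 η2 x| < ε :=
  Jmc_tendstoUniformly_Jb_general L hL W hWcont hWper κ η1 η2
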